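/- arXiv:2006.12535 — 3 statements merged into one kernel-verified Lean document; each statement's English description precedes it below -/
import Mathlib

section
/- Let 1 ≤ m ≤ n be integers, p a prime, F : F_{p^n} → F_{p^m}, and c ∈ F_{p^m} with c ≠ 1. Then F is perfect₁ c-nonlinear if and only if F is c-differential bent₁. -/
open Finset

noncomputable section

/-- Finite fields `GaloisField p n` are finite; fix a `Fintype` instance. -/
noncomputable instance (p n : ℕ) [Fact p.Prime] : Fintype (GaloisField p n) :=
  Fintype.ofFinite _

/-- `ζ_q = exp(2πi/q)`. -/
noncomputable def zetaC (q : ℕ) : ℂ := Complex.exp (2 * Real.pi * Complex.I / q)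

/-- `ζ_p^t` for `t ∈ F_p`, computed via the integer lift of `t`. -/
noncomputable def eChar (p : ℕ) (t : ZMod p) : ℂ := zetaC p ^ t.val

/-- The absolute trace `Tr_k : F_{p^k} → F_p`. -/
noncomputable def trAbs (p k : ℕ) [Fact p.Prime] (x : GaloisField p k) : ZMod p :=
  Algebra.trace (ZMod p) (GaloisField p k) x

/-- The Walsh transform `W_F(a,b) = ∑_x ζ_p^{Tr_m(b·F(x)) − Tr_n(a·x)}`. -/
noncomputable def Walsh (p n m : ℕ) [Fact p.Prime] (F : GaloisField p n → GaloisField p m)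
    (a : GaloisField p n) (b : GaloisField p m) : ℂ :=
  ∑ x : GaloisField p n, eChar p (trAbs p m (b * F x) - trAbs p n (a * x))

/-- The `c`-crosscorrelation `cC_{F,G}(u,b) = ∑_z ζ_p^{Tr_m(b(F(z+u) − c·G(z)))}`. -/
noncomputable def crossCorr (p n m : ℕ) [Fact p.Prime]
    (F G : GaloisField p n → GaloisField p m) (c : GaloisField p m)
    (u : GaloisField p n) (b : GaloisField p m) : ℂ :=
  ∑ x : GaloisField p n, eChar p (trAbs p m (b * (F (x + u) - c * G x)))

/-- The `c`-autocorrelation `cC_F = cC_{F,F}`. -/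
noncomputable def autoCorr (p n m : ℕ) [Fact p.Prime]
    (F : GaloisField p n → GaloisField p m) (c : GaloisField p m)
    (u : GaloisField p n) (b : GaloisField p m) : ℂ :=
  crossCorr p n m F F c u b

/-- `F` is perfect₁ `c`-nonlinear: `cC_F(u,b) = 0` for all `u ≠ 0`, `b ≠ 0`. -/
def PerfectCNonlinear1 (p n m : ℕ) [Fact p.Prime]
    (F : GaloisField p n → GaloisField p m) (c : GaloisField p m) : Prop :=
  ∀ u : GaloisField p n, u ≠ 0 → ∀ b : GaloisField p m, b ≠ 0 →
    autoCorr p n m F c u b = 0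

/-- `F` is strictly perfect₁ `c`-nonlinear: `cC_F(u,b) = 0` for all `u`, all `b ≠ 0`. -/
def StrictlyPerfectCNonlinear1 (p n m : ℕ) [Fact p.Prime]
    (F : GaloisField p n → GaloisField p m) (c : GaloisField p m) : Prop :=
  ∀ u : GaloisField p n, ∀ b : GaloisField p m, b ≠ 0 →
    autoCorr p n m F c u b = 0

/-- `F` is `c`-differential bent₁:
`W_F(x,b)·conj(W_F(x,bc)) = cC_F(0,b)` for all `x` and all `b ≠ 0`. -/
def CDifferentialBent1 (p n m : ℕ) [Fact p.Prime]
    (F : GaloisField p n → GaloisField p m) (c : GaloisField p m) : Prop :=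
  ∀ x : GaloisField p n, ∀ b : GaloisField p m, b ≠ 0 →
    Walsh p n m F x b * (starRingEnd ℂ) (Walsh p n m F x (b * c)) =
      autoCorr p n m F c 0 b

/-!
With `ψ x = ζ_p ^ Tr(x)`, a primitive additive character of the field, `W_F(a,b)` is the Fourier
transform at `a` of `x ↦ ψ(b F(x))`, and by the correlation theorem
`W_F(a,b) · conj W_F(a,bc)` is the Fourier transform at `a` of `u ↦ cC_F(u,b)`. By Fourier
inversion, a function whose transform is everywhere equal to its value at `0` is exactly one
supported at `0`; for `u ↦ cC_F(u,b)` these two conditions are `c`-differential bentness and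
perfect `c`-nonlinearity.
-/

section Fourier

variable {R : Type*} [CommRing R] [Fintype R]

def charTransform (ψ : AddChar R ℂ) (f : R → ℂ) (a : R) : ℂ :=
  ∑ x, f x * ψ (-(a * x))

def correlation (f g : R → ℂ) (u : R) : ℂ :=
  ∑ x, f (x + u) * starRingEnd ℂ (g x)

theorem charTransform_mul_conj_charTransform (ψ : AddChar R ℂ) (f g : R → ℂ) (a : R) :
    charTransform ψ f a * starRingEnd ℂ (charTransform ψ g a) =
      charTransform ψ (correlation f g) a := by
  rw [charTransform, charTransform, charTransform, map_sum, sum_mul_sum, sum_comm]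
  simp only [correlation, sum_mul]
  conv_rhs => rw [sum_comm]
  refine sum_congr rfl fun y _ => Fintype.sum_equiv (Equiv.subRight y) _ _ fun x => ?_
  rw [Equiv.subRight_apply, add_sub_cancel, map_mul, ← AddChar.map_neg_eq_conj, neg_neg,
    show -(a * (x - y)) = -(a * x) + a * y by ring, AddChar.map_add_eq_mul]
  ring

theorem sum_mul_charTransform [DecidableEq R] {ψ : AddChar R ℂ} (hψ : ψ.IsPrimitive)
    (f : R → ℂ) (v : R) :
    ∑ a, ψ (a * v) * charTransform ψ f a = Fintype.card R * f v := by
  simp only [charTransform, mul_sum]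
  rw [sum_comm]
  have hshift (u a : R) : ψ (a * v) * (f u * ψ (-(a * u))) = f u * ψ (a * (v - u)) := by
    rw [mul_sub, sub_eq_add_neg, AddChar.map_add_eq_mul]
    ring
  simp only [hshift, ← mul_sum, AddChar.sum_mulShift _ hψ, sub_eq_zero, Nat.cast_ite,
    Nat.cast_zero, mul_ite, mul_zero]
  rw [sum_ite_eq, if_pos (mem_univ v), mul_comm]

theorem forall_charTransform_eq_apply_zero_iff [DecidableEq R] {ψ : AddChar R ℂ}
    (hψ : ψ.IsPrimitive) (f : R → ℂ) :
    (∀ a, charTransform ψ f a = f 0) ↔ ∀ u ≠ 0, f u = 0 := by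
  refine ⟨fun h v hv => ?_, fun h a => ?_⟩
  · have hinv := sum_mul_charTransform hψ f v
    simp only [h, ← sum_mul, AddChar.sum_mulShift _ hψ, if_neg hv, Nat.cast_zero, zero_mul]
      at hinv
    exact (mul_eq_zero.mp hinv.symm).resolve_left (Nat.cast_ne_zero.mpr Fintype.card_ne_zero)
  · rw [charTransform, Fintype.sum_eq_single 0 fun u hu => by rw [h u hu, zero_mul], mul_zero,
      neg_zero, AddChar.map_zero_eq_one, mul_one]

end Fourier

section TraceChar

variable (p : ℕ) [Fact p.Prime]

def traceChar (L : Type*) [Field L] [Finite L] [Algebra (ZMod p) L] : AddChar L ℂ :=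
  ZMod.stdAddChar.compAddMonoidHom (Algebra.trace (ZMod p) L).toAddMonoidHom

theorem isPrimitive_traceChar (L : Type*) [Field L] [Finite L] [Algebra (ZMod p) L] :
    (traceChar p L).IsPrimitive := by
  refine AddChar.IsPrimitive.of_ne_one (AddChar.ne_one_iff.mpr ?_)
  obtain ⟨x, hx⟩ : ∃ x, Algebra.trace (ZMod p) L x ≠ 0 := by
    simpa [LinearMap.ext_iff] using Algebra.trace_ne_zero (ZMod p) L
  exact ⟨x, fun h => hx (ZMod.injective_stdAddChar (h.trans (AddChar.map_zero_eq_one _).symm))⟩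

theorem eChar_eq_stdAddChar (t : ZMod p) : eChar p t = ZMod.stdAddChar t := by
  rw [eChar, zetaC, ZMod.stdAddChar_apply, ZMod.toCircle_apply, ← Complex.exp_nat_mul]
  ring_nf

theorem eChar_trAbs (k : ℕ) (x : GaloisField p k) :
    eChar p (trAbs p k x) = traceChar p (GaloisField p k) x := by
  rw [eChar_eq_stdAddChar]
  rfl

end TraceChar

section Correlation

variable {p n m : ℕ} [Fact p.Prime]

local notation "ψ" k => traceChar p (GaloisField p k)

theorem walsh_eq_charTransform (F : GaloisField p n → GaloisField p m)
    (a : GaloisField p n) (b : GaloisField p m) :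
    Walsh p n m F a b = charTransform (ψ n) (fun x => (ψ m) (b * F x)) a := by
  refine sum_congr rfl fun x _ => ?_
  have hneg : -trAbs p n (a * x) = trAbs p n (-(a * x)) :=
    (map_neg (Algebra.trace (ZMod p) (GaloisField p n)) _).symm
  rw [sub_eq_add_neg, hneg, eChar_eq_stdAddChar, AddChar.map_add_eq_mul, ← eChar_eq_stdAddChar,
    ← eChar_eq_stdAddChar, eChar_trAbs, eChar_trAbs]

theorem autoCorr_eq_correlation (F : GaloisField p n → GaloisField p m)
    (c : GaloisField p m) (u : GaloisField p n) (b : GaloisField p m) :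
    autoCorr p n m F c u b =
      correlation (fun x => (ψ m) (b * F x)) (fun x => (ψ m) (b * c * F x)) u := by
  refine sum_congr rfl fun x _ => ?_
  rw [eChar_trAbs, ← AddChar.map_neg_eq_conj, ← AddChar.map_add_eq_mul]
  congr 1
  ring

theorem walsh_mul_conj_walsh (F : GaloisField p n → GaloisField p m) (c : GaloisField p m)
    (a : GaloisField p n) (b : GaloisField p m) :
    Walsh p n m F a b * starRingEnd ℂ (Walsh p n m F a (b * c)) =
      charTransform (ψ n) (fun u => autoCorr p n m F c u b) a := by
  simp only [walsh_eq_charTransform, charTransform_mul_conj_charTransform, autoCorr_eq_correlation]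

end Correlation

theorem statement_1_general (p n m : ℕ) [Fact p.Prime]
    (F : GaloisField p n → GaloisField p m) (c : GaloisField p m) :
    PerfectCNonlinear1 p n m F c ↔ CDifferentialBent1 p n m F c := by
  classical
  have hinv (b : GaloisField p m) :=
    forall_charTransform_eq_apply_zero_iff (isPrimitive_traceChar p (GaloisField p n))
      (fun u => autoCorr p n m F c u b)
  simp only [CDifferentialBent1, walsh_mul_conj_walsh]
  exact ⟨fun h a b hb => (hinv b).mpr (fun u hu => h u hu b hb) a,
    fun h u hu b hb => (hinv b).mp (fun a => h a b hb) u hu⟩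

theorem statement_1 (p n m : ℕ) [Fact p.Prime] (hm : 1 ≤ m) (hmn : m ≤ n)
    (F : GaloisField p n → GaloisField p m) (c : GaloisField p m) (hc : c ≠ 1) :
    PerfectCNonlinear1 p n m F c ↔ CDifferentialBent1 p n m F c :=
  statement_1_general p n m F c
end
end

section
/- Let p be a prime, n ≥ 2, c ∈ F_{p^n}, and let F(x) = ∑_{i,j=0}^{n−1} a_{ij}·x^{p^i+p^j} with all a_{ij} ∈ F_{p^n} be a Dembowski–Ostrom polynomial on F_{p^n}. Suppose there exist u ∈ F_{p^n}\{0} and b ∈ F_{p^n}\{0} such that L_u(b) = 0 and ∑_{i=1}^{p−1} |Ω_{b(1−c)F, i}| < p^{n−1}. Then F is not c-differential bent₁. -/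
open Finset

noncomputable section

section helpers
variable (p : ℕ) [hp : Fact p.Prime]

lemma zeta_prim : IsPrimitiveRoot (zetaC p) p :=
  Complex.isPrimitiveRoot_exp p hp.out.ne_zero

lemma zeta_pow_p : zetaC p ^ p = 1 := (zeta_prim p).pow_eq_one

lemma zeta_pow_mod (k : ℕ) : zetaC p ^ k = zetaC p ^ (k % p) := by
  conv_lhs => rw [← Nat.mod_add_div k p, pow_add, pow_mul, zeta_pow_p, one_pow, mul_one]

lemma eChar_add (s t : ZMod p) : eChar p (s + t) = eChar p s * eChar p t := by
  haveI : NeZero p := ⟨hp.out.ne_zero⟩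
  rw [eChar, eChar, eChar, ← pow_add, ZMod.val_add, ← zeta_pow_mod]

lemma eChar_zero : eChar p 0 = 1 := by
  haveI : NeZero p := ⟨hp.out.ne_zero⟩
  simp [eChar]

lemma eChar_mul_neg (t : ZMod p) : eChar p t * eChar p (-t) = 1 := by
  rw [← eChar_add]; simp [eChar_zero]

lemma eChar_ne_zero (t : ZMod p) : eChar p t ≠ 0 :=
  left_ne_zero_of_mul_eq_one (eChar_mul_neg p t)

lemma conj_eChar (t : ZMod p) : (starRingEnd ℂ) (eChar p t) = eChar p (-t) := by
  have h1 : (starRingEnd ℂ) (zetaC p) = (zetaC p)⁻¹ := by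
    rw [zetaC, ← Complex.exp_conj, ← Complex.exp_neg]
    congr 1
    simp only [map_div₀, map_mul, Complex.conj_I, Complex.conj_ofNat,
      Complex.conj_ofReal, map_natCast]
    ring
  rw [eChar, map_pow, h1, inv_pow, ← eChar]
  exact inv_eq_of_mul_eq_one_right (eChar_mul_neg p t)

lemma eChar_eq_one_iff (t : ZMod p) : eChar p t = 1 ↔ t = 0 := by
  haveI : NeZero p := ⟨hp.out.ne_zero⟩
  constructor
  · intro h
    have := ((zeta_prim p).pow_eq_one_iff_dvd t.val).mp h
    have hv := ZMod.val_lt t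
    have h0 : t.val = 0 := Nat.eq_zero_of_dvd_of_lt this hv |>.symm ▸ rfl
    exact (ZMod.val_eq_zero t).mp h0
  · rintro rfl; exact eChar_zero p
end helpers

section trace
variable (p n : ℕ) [hp : Fact p.Prime]

lemma trAbs_add (x y : GaloisField p n) :
    trAbs p n (x + y) = trAbs p n x + trAbs p n y := by
  simp [trAbs, map_add]

lemma trAbs_sub (x y : GaloisField p n) :
    trAbs p n (x - y) = trAbs p n x - trAbs p n y := by
  simp [trAbs, map_sub]

lemma trAbs_zero : trAbs p n (0 : GaloisField p n) = 0 := by simp [trAbs]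

lemma trAbs_sum {ι : Type*} (s : Finset ι) (f : ι → GaloisField p n) :
    trAbs p n (∑ i ∈ s, f i) = ∑ i ∈ s, trAbs p n (f i) := by
  simp [trAbs, map_sum]

noncomputable def frobAlg : GaloisField p n ≃ₐ[ZMod p] GaloisField p n :=
  AlgEquiv.ofBijective
    (AlgHom.mk' (frobenius (GaloisField p n) p)
      (fun c x => by
        simp only [frobenius_def, Algebra.smul_def, mul_pow, ← map_pow, ZMod.pow_card]))
    ((Finite.injective_iff_bijective).mp (frobenius_inj _ p))

lemma trAbs_pow_p (x : GaloisField p n) : trAbs p n (x ^ p) = trAbs p n x := by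
  have := Algebra.trace_eq_of_algEquiv (frobAlg p n) x
  simpa [trAbs, frobAlg, frobenius_def] using this

lemma trAbs_pow_pow (k : ℕ) (x : GaloisField p n) :
    trAbs p n (x ^ p ^ k) = trAbs p n x := by
  induction k with
  | zero => simp
  | succ k ih => rw [pow_succ, pow_mul, trAbs_pow_p, ih]

lemma gf_card (hn : n ≠ 0) : Fintype.card (GaloisField p n) = p ^ n := by
  rw [← Nat.card_eq_fintype_card, GaloisField.card p n hn]

lemma gf_pow_card (hn : n ≠ 0) (x : GaloisField p n) : x ^ p ^ n = x := by
  have := FiniteField.pow_card x (K := GaloisField p n)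
  rwa [gf_card p n hn] at this

lemma sum_eChar_mul {u : GaloisField p n} (hu : u ≠ 0) :
    ∑ a : GaloisField p n, eChar p (trAbs p n (a * u)) = 0 := by
  obtain ⟨y, hy⟩ := Algebra.trace_surjective (ZMod p) (GaloisField p n) 1
  set a0 := y * u⁻¹ with ha0
  have hτ : trAbs p n (a0 * u) = 1 := by
    rw [ha0, mul_assoc, inv_mul_cancel₀ hu, mul_one]; exact hy
  set S := ∑ a : GaloisField p n, eChar p (trAbs p n (a * u)) with hS
  have hshift : S = S * eChar p 1 := by
    have hre := Fintype.sum_equiv (Equiv.addRight a0)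
      (fun a : GaloisField p n => eChar p (trAbs p n ((a + a0) * u)))
      (fun a : GaloisField p n => eChar p (trAbs p n (a * u))) (fun a => rfl)
    calc S = ∑ a : GaloisField p n, eChar p (trAbs p n ((a + a0) * u)) := hre.symm
    _ = S * eChar p 1 := by
        rw [hS, Finset.sum_mul]
        refine Finset.sum_congr rfl fun a _ => ?_
        rw [add_mul, trAbs_add, eChar_add, hτ]
  have hne : eChar p (1 : ZMod p) ≠ 1 := by
    rw [Ne, eChar_eq_one_iff]
    exact fun h => one_ne_zero h
  have : S * (1 - eChar p 1) = 0 := by linear_combination hshift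
  rcases mul_eq_zero.mp this with h | h
  · exact h
  · exact absurd (by linear_combination -h : eChar p (1:ZMod p) = 1) hne

open Classical in
lemma sum_eChar_ortho (hn : n ≠ 0) (v : GaloisField p n) :
    ∑ a : GaloisField p n, eChar p (trAbs p n (a * v)) =
      if v = 0 then ((p : ℂ) ^ n) else 0 := by
  split_ifs with h
  · subst h
    simp only [mul_zero, trAbs_zero, eChar_zero]
    rw [Finset.sum_const, Finset.card_univ, gf_card p n hn]
    push_cast; ring
  · exact sum_eChar_mul p n h
end trace

section corr
variable (p n : ℕ) [hp : Fact p.Prime]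

open Classical in
lemma walsh_corr (hn : n ≠ 0) (F : GaloisField p n → GaloisField p n)
    (c u b : GaloisField p n) :
    ∑ a : GaloisField p n,
        Walsh p n n F a b * (starRingEnd ℂ) (Walsh p n n F a (b * c)) *
          eChar p (trAbs p n (a * u))
      = (p : ℂ) ^ n * autoCorr p n n F c u b := by
  have hexp : ∀ aa x y : GaloisField p n,
      trAbs p n (b * F x) - trAbs p n (aa * x) +
        (-(trAbs p n (b * c * F y) - trAbs p n (aa * y))) + trAbs p n (aa * u)
      = (trAbs p n (b * F x) - trAbs p n (b * c * F y)) +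
          trAbs p n (aa * (y - x + u)) := by
    intro aa x y
    have h1 : aa * (y - x + u) = aa * y - aa * x + aa * u := by ring
    rw [h1, trAbs_add, trAbs_sub]; ring
  have step1 : ∀ aa : GaloisField p n,
      Walsh p n n F aa b * (starRingEnd ℂ) (Walsh p n n F aa (b * c)) *
          eChar p (trAbs p n (aa * u))
      = ∑ x : GaloisField p n, ∑ y : GaloisField p n,
          eChar p ((trAbs p n (b * F x) - trAbs p n (b * c * F y)) +
            trAbs p n (aa * (y - x + u))) := by
    intro aa
    rw [Walsh, Walsh, map_sum, Finset.sum_mul_sum, Finset.sum_mul]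
    refine Finset.sum_congr rfl fun x _ => ?_
    rw [Finset.sum_mul]
    refine Finset.sum_congr rfl fun y _ => ?_
    rw [conj_eChar, ← eChar_add, ← eChar_add, hexp]
  calc ∑ a : GaloisField p n,
        Walsh p n n F a b * (starRingEnd ℂ) (Walsh p n n F a (b * c)) *
          eChar p (trAbs p n (a * u))
      = ∑ aa : GaloisField p n, ∑ x : GaloisField p n, ∑ y : GaloisField p n,
          eChar p ((trAbs p n (b * F x) - trAbs p n (b * c * F y)) +
            trAbs p n (aa * (y - x + u))) :=
        Finset.sum_congr rfl fun aa _ => step1 aa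
    _ = ∑ x : GaloisField p n, ∑ y : GaloisField p n, ∑ aa : GaloisField p n,
          eChar p ((trAbs p n (b * F x) - trAbs p n (b * c * F y)) +
            trAbs p n (aa * (y - x + u))) := by
        rw [Finset.sum_comm]
        exact Finset.sum_congr rfl fun x _ => Finset.sum_comm
    _ = ∑ x : GaloisField p n, ∑ y : GaloisField p n,
          eChar p (trAbs p n (b * F x) - trAbs p n (b * c * F y)) *
            (if y - x + u = 0 then ((p : ℂ) ^ n) else 0) := by
        refine Finset.sum_congr rfl fun x _ => Finset.sum_congr rfl fun y _ => ?_
        simp only [eChar_add]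
        rw [← Finset.mul_sum, sum_eChar_ortho p n hn]
    _ = ∑ x : GaloisField p n,
          eChar p (trAbs p n (b * F x) - trAbs p n (b * c * F (x - u))) * (p : ℂ) ^ n := by
        refine Finset.sum_congr rfl fun x _ => ?_
        rw [Finset.sum_eq_single (x - u)]
        · rw [if_pos (by ring)]
        · intro y _ hy
          rw [if_neg, mul_zero]
          intro h
          apply hy
          have : y = x - u := by linear_combination h
          exact this
        · intro h; exact absurd (Finset.mem_univ _) h
    _ = (p : ℂ) ^ n * autoCorr p n n F c u b := by
        rw [autoCorr, crossCorr, Finset.mul_sum]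
        refine Fintype.sum_equiv (Equiv.subRight u) _ _ fun z => ?_
        simp only [Equiv.subRight_apply]
        rw [sub_add_cancel, mul_comm]
        congr 2
        rw [show b * (F z - c * F (z - u)) = b * F z - b * c * F (z - u) by ring, trAbs_sub]
end corr

section main
variable (p n : ℕ) [hp : Fact p.Prime]

lemma bent_pn (hn : n ≠ 0) (F : GaloisField p n → GaloisField p n) (c : GaloisField p n)
    (hbent : CDifferentialBent1 p n n F c) {u b : GaloisField p n}
    (hu : u ≠ 0) (hb : b ≠ 0) : autoCorr p n n F c u b = 0 := by
  have h := walsh_corr p n hn F c u b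
  have h2 : ∑ a : GaloisField p n,
      autoCorr p n n F c 0 b * eChar p (trAbs p n (a * u))
      = (p : ℂ) ^ n * autoCorr p n n F c u b := by
    rw [← h]
    exact Finset.sum_congr rfl fun a _ => by rw [hbent a b hb]
  rw [← Finset.mul_sum, sum_eChar_mul p n hu, mul_zero] at h2
  have hp0 : ((p : ℂ)) ^ n ≠ 0 := pow_ne_zero _ (Nat.cast_ne_zero.mpr hp.out.ne_zero)
  exact (mul_eq_zero.mp h2.symm).resolve_left hp0

variable (a : ℕ → ℕ → GaloisField p n) (F : GaloisField p n → GaloisField p n)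
    (A : ℕ → GaloisField p n → GaloisField p n)

lemma DO_split
    (hF : ∀ x, F x = ∑ i ∈ Finset.range n, ∑ j ∈ Finset.range n, a i j * x ^ (p ^ i + p ^ j))
    (hA : ∀ i u, A i u = ∑ k ∈ Finset.range n, u ^ p ^ k * (a i k + a k i))
    (x u : GaloisField p n) :
    F (x + u) = F x + F u + ∑ i ∈ Finset.range n, A i u * x ^ p ^ i := by
  have expand : ∀ (z w : GaloisField p n) (i j : ℕ), (z + w) ^ (p ^ i + p ^ j)
      = z ^ p ^ i * z ^ p ^ j + (z ^ p ^ i * w ^ p ^ j + w ^ p ^ i * z ^ p ^ j)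
        + w ^ p ^ i * w ^ p ^ j := by
    intro z w i j
    rw [pow_add, add_pow_char_pow, add_pow_char_pow]
    ring
  have cross : ∑ i ∈ Finset.range n, A i u * x ^ p ^ i
      = (∑ i ∈ Finset.range n, ∑ j ∈ Finset.range n, a i j * (x ^ p ^ i * u ^ p ^ j))
        + ∑ i ∈ Finset.range n, ∑ j ∈ Finset.range n, a i j * (u ^ p ^ i * x ^ p ^ j) := by
    rw [Finset.sum_comm (f := fun i j => a i j * (u ^ p ^ i * x ^ p ^ j)),
      ← Finset.sum_add_distrib]
    refine Finset.sum_congr rfl fun i _ => ?_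
    rw [hA, Finset.sum_mul, ← Finset.sum_add_distrib]
    refine Finset.sum_congr rfl fun k _ => ?_
    ring
  rw [hF (x + u), hF x, hF u, cross]
  rw [show (∑ i ∈ Finset.range n, ∑ j ∈ Finset.range n, a i j * x ^ (p ^ i + p ^ j)) =
      ∑ i ∈ Finset.range n, ∑ j ∈ Finset.range n, a i j * (x ^ p ^ i * x ^ p ^ j) from
    Finset.sum_congr rfl fun i _ => Finset.sum_congr rfl fun j _ => by rw [pow_add]]
  rw [show (∑ i ∈ Finset.range n, ∑ j ∈ Finset.range n, a i j * u ^ (p ^ i + p ^ j)) =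
      ∑ i ∈ Finset.range n, ∑ j ∈ Finset.range n, a i j * (u ^ p ^ i * u ^ p ^ j) from
    Finset.sum_congr rfl fun i _ => Finset.sum_congr rfl fun j _ => by rw [pow_add]]
  rw [show (∑ i ∈ Finset.range n, ∑ j ∈ Finset.range n, a i j * (x+u) ^ (p ^ i + p ^ j)) =
      ∑ i ∈ Finset.range n, ∑ j ∈ Finset.range n,
        (a i j * (x ^ p ^ i * x ^ p ^ j) +
          (a i j * (x ^ p ^ i * u ^ p ^ j) + a i j * (u ^ p ^ i * x ^ p ^ j)) +
          a i j * (u ^ p ^ i * u ^ p ^ j)) from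
    Finset.sum_congr rfl fun i _ => Finset.sum_congr rfl fun j _ => by rw [expand]; ring]
  simp only [Finset.sum_add_distrib]
  ring
end main

section main2
variable (p n : ℕ) [hp : Fact p.Prime]
variable (a : ℕ → ℕ → GaloisField p n)
    (A : ℕ → GaloisField p n → GaloisField p n)
    (L : GaloisField p n → GaloisField p n → GaloisField p n)

lemma trB_zero (hn : n ≠ 0)
    (hL : ∀ u x, L u x = ∑ r ∈ Finset.range n, A (n - 1 - r) u ^ p ^ r * x ^ p ^ r)
    (u b : GaloisField p n) (hLub : L u b = 0) (x : GaloisField p n) :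
    trAbs p n (b * ∑ i ∈ Finset.range n, A i u * x ^ p ^ i) = 0 := by
  have hsum0 : (∑ i ∈ Finset.range n, (b * A i u) ^ p ^ (n - i)) = 0 := by
    have heq : ∑ i ∈ Finset.range n, (b * A i u) ^ p ^ (n - i) = (L u b) ^ p := by
      rw [hL, sum_pow_char, ← Finset.sum_range_reflect]
      refine Finset.sum_congr rfl fun r hr => ?_
      have hr' : r < n := Finset.mem_range.mp hr
      have h1 : n - (n - 1 - r) = r + 1 := by omega
      rw [h1, ← mul_pow, pow_succ, pow_mul, mul_comm (A (n-1-r) u) b]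
    rw [heq, hLub, zero_pow hp.out.ne_zero]
  calc trAbs p n (b * ∑ i ∈ Finset.range n, A i u * x ^ p ^ i)
      = ∑ i ∈ Finset.range n, trAbs p n (b * (A i u * x ^ p ^ i)) := by
        rw [Finset.mul_sum, trAbs_sum]
    _ = ∑ i ∈ Finset.range n, trAbs p n ((b * A i u) ^ p ^ (n - i) * x) := by
        refine Finset.sum_congr rfl fun i hi => ?_
        have hi' : i < n := Finset.mem_range.mp hi
        have hx : (x ^ p ^ i) ^ p ^ (n - i) = x := by
          rw [← pow_mul, ← pow_add, Nat.add_sub_cancel' hi'.le]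
          exact gf_pow_card p n hn x
        have hz : (b * (A i u * x ^ p ^ i)) ^ p ^ (n - i)
            = (b * A i u) ^ p ^ (n - i) * x := by
          rw [← mul_assoc, mul_pow, hx]
        rw [← hz, trAbs_pow_pow]
    _ = trAbs p n ((∑ i ∈ Finset.range n, (b * A i u) ^ p ^ (n - i)) * x) := by
        rw [Finset.sum_mul, trAbs_sum]
    _ = 0 := by rw [hsum0, zero_mul, trAbs_zero]

lemma corr_factor (hn : n ≠ 0)
    (F : GaloisField p n → GaloisField p n) (c : GaloisField p n)
    (hsplit : ∀ x u, F (x + u) = F x + F u + ∑ i ∈ Finset.range n, A i u * x ^ p ^ i)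
    (u b : GaloisField p n)
    (hB : ∀ x, trAbs p n (b * ∑ i ∈ Finset.range n, A i u * x ^ p ^ i) = 0) :
    autoCorr p n n F c u b
      = eChar p (trAbs p n (b * F u)) *
        ∑ x : GaloisField p n, eChar p (trAbs p n (b * (1 - c) * F x)) := by
  rw [autoCorr, crossCorr, Finset.mul_sum]
  refine Finset.sum_congr rfl fun x _ => ?_
  have h1 : b * (F (x + u) - c * F x)
      = b * F u + (b * (1 - c) * F x +
          b * ∑ i ∈ Finset.range n, A i u * x ^ p ^ i) := by
    rw [hsplit x u]; ring
  rw [h1, trAbs_add, trAbs_add, hB, add_zero, eChar_add]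
end main2

section counting
variable (p n : ℕ) [hp : Fact p.Prime]

lemma S_ne_zero (hn2 : 2 ≤ n) (g : GaloisField p n → ZMod p)
    (hsupp : ∑ i ∈ Finset.Icc 1 (p - 1),
        (Finset.univ.filter fun x : GaloisField p n => g x = (i : ZMod p)).card < p ^ (n - 1)) :
    ∑ x : GaloisField p n, eChar p (g x) ≠ 0 := by
  haveI : NeZero p := ⟨hp.out.ne_zero⟩
  have hn : n ≠ 0 := by omega
  have hp2 : 2 ≤ p := hp.out.two_le
  set N : ℕ → ℕ := fun t =>
    (Finset.univ.filter fun x : GaloisField p n => g x = (t : ZMod p)).card with hN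
  -- the fibers of x ↦ (g x).val over range p agree with N
  have hfiber : ∀ t ∈ Finset.range p,
      (Finset.univ.filter fun x : GaloisField p n => (g x).val = t) =
      (Finset.univ.filter fun x : GaloisField p n => g x = (t : ZMod p)) := by
    intro t ht
    have ht' : t < p := Finset.mem_range.mp ht
    refine Finset.filter_congr fun x _ => ?_
    constructor
    · intro h; rw [← h, ZMod.natCast_zmod_val]
    · intro h; rw [h, ZMod.val_cast_of_lt ht']
  have hmaps : ∀ x : GaloisField p n, x ∈ (Finset.univ : Finset (GaloisField p n)) →
      (g x).val ∈ Finset.range p := fun x _ => Finset.mem_range.mpr (ZMod.val_lt _)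
  -- the sum as a weighted sum of powers of ζ
  have hsum : ∑ x : GaloisField p n, eChar p (g x)
      = ∑ t ∈ Finset.range p, (N t : ℂ) * zetaC p ^ t := by
    rw [← Finset.sum_fiberwise_of_maps_to hmaps (fun x => eChar p (g x))]
    refine Finset.sum_congr rfl fun t ht => ?_
    have : ∀ x ∈ Finset.univ.filter fun x : GaloisField p n => (g x).val = t,
        eChar p (g x) = zetaC p ^ t := by
      intro x hx
      rw [eChar, (Finset.mem_filter.mp hx).2]
    rw [Finset.sum_congr rfl this, Finset.sum_const, hfiber t ht]
    simp [hN, nsmul_eq_mul]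
  -- total count
  have htotal : ∑ t ∈ Finset.range p, N t = p ^ n := by
    have := Finset.card_eq_sum_card_fiberwise hmaps
    rw [Finset.card_univ, gf_card p n hn] at this
    have h2 : ∑ t ∈ Finset.range p, N t
        = ∑ t ∈ Finset.range p,
            (Finset.univ.filter fun x : GaloisField p n => (g x).val = t).card :=
      Finset.sum_congr rfl fun t ht => by simp only [hN]; rw [← hfiber t ht]
    rw [h2]; exact this.symm
  intro hS0
  rw [hsum] at hS0
  -- geometric sum vanishes
  have hgeom : ∑ t ∈ Finset.range p, (zetaC p : ℂ) ^ t = 0 :=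
    (zeta_prim p).geom_sum_eq_zero hp.out.one_lt
  have hzero : ∑ t ∈ Finset.range p, ((N t : ℂ) - (N 0 : ℂ)) * zetaC p ^ t = 0 := by
    have : ∑ t ∈ Finset.range p, ((N t : ℂ) - (N 0 : ℂ)) * zetaC p ^ t
        = (∑ t ∈ Finset.range p, (N t : ℂ) * zetaC p ^ t)
          - (N 0 : ℂ) * ∑ t ∈ Finset.range p, (zetaC p : ℂ) ^ t := by
      rw [Finset.mul_sum, ← Finset.sum_sub_distrib]
      exact Finset.sum_congr rfl fun t _ => by ring
    rw [this, hS0, hgeom, mul_zero, sub_zero]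
  -- peel off the t = 0 term and divide by ζ
  have hzne : (zetaC p : ℂ) ≠ 0 := by
    intro h
    have := zeta_pow_p p
    rw [h, zero_pow hp.out.ne_zero] at this
    exact zero_ne_one this
  have hQ : ∑ t ∈ Finset.range (p - 1), ((N (t + 1) : ℂ) - (N 0 : ℂ)) * zetaC p ^ t = 0 := by
    have hp' : p = (p - 1) + 1 := by omega
    rw [hp', Finset.sum_range_succ'] at hzero
    rw [← hp'] at hzero
    simp only [pow_zero, mul_one, sub_self, Nat.cast_zero, add_zero] at hzero
    have : ∑ t ∈ Finset.range (p - 1), ((N (t + 1) : ℂ) - (N 0 : ℂ)) * zetaC p ^ (t + 1)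
        = zetaC p * ∑ t ∈ Finset.range (p - 1), ((N (t + 1) : ℂ) - (N 0 : ℂ)) * zetaC p ^ t := by
      rw [Finset.mul_sum]
      exact Finset.sum_congr rfl fun t _ => by ring
    rw [this] at hzero
    rcases mul_eq_zero.mp hzero with h | h
    · exact absurd h hzne
    · exact h
  -- build the rational polynomial
  set P : Polynomial ℚ := ∑ t ∈ Finset.range (p - 1),
    Polynomial.C ((N (t + 1) : ℚ) - (N 0 : ℚ)) * Polynomial.X ^ t with hP
  have haeval : Polynomial.aeval (zetaC p) P = 0 := by
    rw [hP, map_sum]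
    rw [← hQ]
    refine Finset.sum_congr rfl fun t _ => ?_
    simp only [map_mul, map_pow, Polynomial.aeval_C, Polynomial.aeval_X]
    push_cast
    ring
  have hPdeg : P.natDegree < p - 1 ∨ P = 0 := by
    by_cases h0 : P = 0
    · exact Or.inr h0
    · left
      have : P.natDegree ≤ p - 2 := by
        rw [hP]
        refine (Polynomial.natDegree_sum_le _ _).trans ?_
        rw [Finset.fold_max_le]
        constructor
        · omega
        · intro t ht
          refine (Polynomial.natDegree_C_mul_le _ _).trans ?_
          rw [Polynomial.natDegree_X_pow]
          have := Finset.mem_range.mp ht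
          omega
      omega
  have hPzero : P = 0 := by
    rcases hPdeg with h | h
    · by_contra h0
      have hdvd : minpoly ℚ (zetaC p) ∣ P := minpoly.dvd ℚ _ haeval
      have hmin : minpoly ℚ (zetaC p) = Polynomial.cyclotomic p ℚ :=
        (Polynomial.cyclotomic_eq_minpoly_rat (zeta_prim p) hp.out.pos).symm
      have hdeg := Polynomial.natDegree_le_of_dvd hdvd h0
      rw [hmin, Polynomial.natDegree_cyclotomic, Nat.totient_prime hp.out] at hdeg
      omega
    · exact h
  -- all coefficients vanish, so N 1 = N 0
  have hcoeff : ∀ t, t < p - 1 → (N (t + 1) : ℚ) = (N 0 : ℚ) := by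
    intro t ht
    have : P.coeff t = 0 := by rw [hPzero]; simp
    rw [hP, Polynomial.finset_sum_coeff] at this
    simp only [Polynomial.coeff_C_mul, Polynomial.coeff_X_pow] at this
    rw [Finset.sum_eq_single t
      (fun s _ hs => by rw [if_neg (fun h => hs h.symm), mul_zero])
      (fun hns => absurd (Finset.mem_range.mpr ht) hns)] at this
    rw [if_pos rfl, mul_one, sub_eq_zero] at this
    exact this
  have hNall : ∀ t, t < p - 1 → N (t + 1) = N 0 := fun t ht =>
    Nat.cast_injective (hcoeff t ht)
  -- so p * N 0 = p ^ n, i.e. N 0 = p ^ (n - 1)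
  have hN0 : N 0 = p ^ (n - 1) := by
    have hsplitsum : ∑ t ∈ Finset.range p, N t = p * N 0 := by
      have hp' : p = (p - 1) + 1 := by omega
      rw [hp', Finset.sum_range_succ']
      have : ∑ t ∈ Finset.range (p - 1), N (t + 1)
          = ∑ _t ∈ Finset.range (p - 1), N 0 :=
        Finset.sum_congr rfl fun t ht => hNall t (Finset.mem_range.mp ht)
      rw [this, Finset.sum_const, Finset.card_range, smul_eq_mul, add_mul, one_mul]
    have : p * N 0 = p * p ^ (n - 1) := by
      rw [← hsplitsum, htotal]
      conv_lhs => rw [show n = (n - 1) + 1 by omega]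
      rw [pow_succ]
      ring
    exact Nat.eq_of_mul_eq_mul_left (by omega) this
  -- contradiction with hsupp
  have h1mem : 1 ∈ Finset.Icc 1 (p - 1) := Finset.mem_Icc.mpr ⟨le_refl 1, by omega⟩
  have hge : p ^ (n - 1) ≤ ∑ i ∈ Finset.Icc 1 (p - 1), N i := by
    have h1 := Finset.single_le_sum (s := Finset.Icc 1 (p - 1)) (f := N)
      (fun i _ => Nat.zero_le _) h1mem
    have hN1 : N 1 = p ^ (n - 1) := by
      rw [show (1 : ℕ) = 0 + 1 from rfl, hNall 0 (by omega), hN0]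
    calc p ^ (n - 1) = N 1 := hN1.symm
      _ ≤ _ := h1
  exact absurd hsupp (not_lt.mpr hge)
end counting

theorem statement_13 (p n : ℕ) [Fact p.Prime] (hn : 2 ≤ n) (c : GaloisField p n)
    (a : ℕ → ℕ → GaloisField p n)
    (F : GaloisField p n → GaloisField p n)
    (hF : ∀ x, F x =
      ∑ i ∈ Finset.range n, ∑ j ∈ Finset.range n, a i j * x ^ (p ^ i + p ^ j))
    (A : ℕ → GaloisField p n → GaloisField p n)
    (hA : ∀ i u, A i u = ∑ k ∈ Finset.range n, u ^ p ^ k * (a i k + a k i))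
    (L : GaloisField p n → GaloisField p n → GaloisField p n)
    (hL : ∀ u x, L u x = ∑ r ∈ Finset.range n, A (n - 1 - r) u ^ p ^ r * x ^ p ^ r)
    (u b : GaloisField p n) (hu : u ≠ 0) (hb : b ≠ 0) (hLub : L u b = 0)
    (hsupp : ∑ i ∈ Finset.Icc 1 (p - 1),
        (Finset.univ.filter fun x : GaloisField p n =>
          trAbs p n (b * (1 - c) * F x) = (i : ZMod p)).card < p ^ (n - 1)) :
    ¬ CDifferentialBent1 p n n F c := by
  intro hbent
  have hn0 : n ≠ 0 := by omega
  have h0 : autoCorr p n n F c u b = 0 := bent_pn p n hn0 F c hbent hu hb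
  have hsplit := DO_split p n a F A hF hA
  have hBzero := trB_zero p n A L hn0 hL u b hLub
  have hfac := corr_factor p n A hn0 F c hsplit u b hBzero
  have hS := S_ne_zero p n hn (fun x => trAbs p n (b * (1 - c) * F x)) hsupp
  rw [hfac] at h0
  rcases mul_eq_zero.mp h0 with h | h
  · exact eChar_ne_zero p _ h
  · exact hS h
end
end

section
/- Let p be a prime, n a positive integer, and σ : F_{p^n} → Z/p^nZ a bijection. (a) If L : F_{p^n} → F_{p^n} is a linearized permutation polynomial (an F_p-linear bijection of F_{p^n}), then for every c ∈ F_{p^n} with c ≠ 1 and every a ∈ F_{p^n}, ∑_{x ∈ F_{p^n}} ζ_{p^n}^{σ(L(x+a) − c·L(x))} = 0 (the difference L(x+a) − c·L(x) computed in F_{p^n}); in particular L is perfect₂ c-nonlinear for all c ≠ 1. (b) If F is any bijection of F_{p^n}, then ∑_{x ∈ F_{p^n}} ζ_{p^n}^{σ(F(x))} = 0, i.e., W_F(0) = 0, and hence F is 0-differential bent₂. -/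
open Finset

noncomputable section

/-- `ζ_q^s` for `s ∈ Z/qZ`, computed via the integer lift of `s`. -/
noncomputable def eCharM (q : ℕ) (s : ZMod q) : ℂ := zetaC q ^ s.val

/-- The second-kind Walsh transform
`W_H(a) = ∑_x ζ_{p^m}^{σ(H(x))}·ζ_p^{−Tr_n(a·x)}`. -/
noncomputable def Walsh2 (p n m : ℕ) [Fact p.Prime] (σ : GaloisField p m → ZMod (p ^ m))
    (H : GaloisField p n → GaloisField p m) (a : GaloisField p n) : ℂ :=
  ∑ x : GaloisField p n, eCharM (p ^ m) (σ (H x)) * eChar p (-(trAbs p n (a * x)))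

/-- The second-kind `c`-crosscorrelation
`cC_{F,G}(u) = ∑_x ζ_{p^m}^{σ(F(x+u)) − σ(c·G(x))}`, the difference of exponents
taken in `Z/p^mZ`. -/
noncomputable def crossCorr2 (p n m : ℕ) [Fact p.Prime] (σ : GaloisField p m → ZMod (p ^ m))
    (F G : GaloisField p n → GaloisField p m) (c : GaloisField p m)
    (u : GaloisField p n) : ℂ :=
  ∑ x : GaloisField p n, eCharM (p ^ m) (σ (F (x + u)) - σ (c * G x))

/-- The second-kind `c`-autocorrelation `cC_F = cC_{F,F}`. -/
noncomputable def autoCorr2 (p n m : ℕ) [Fact p.Prime] (σ : GaloisField p m → ZMod (p ^ m))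
    (F : GaloisField p n → GaloisField p m) (c : GaloisField p m)
    (u : GaloisField p n) : ℂ :=
  crossCorr2 p n m σ F F c u

/-- `F` is perfect₂ `c`-nonlinear: `cC_F(u) = 0` for all `u ≠ 0`. -/
def PerfectCNonlinear2 (p n m : ℕ) [Fact p.Prime] (σ : GaloisField p m → ZMod (p ^ m))
    (F : GaloisField p n → GaloisField p m) (c : GaloisField p m) : Prop :=
  ∀ u : GaloisField p n, u ≠ 0 → autoCorr2 p n m σ F c u = 0

/-- `F` is strictly perfect₂ `c`-nonlinear: additionally `cC_F(0) = 0`. -/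
def StrictlyPerfectCNonlinear2 (p n m : ℕ) [Fact p.Prime] (σ : GaloisField p m → ZMod (p ^ m))
    (F : GaloisField p n → GaloisField p m) (c : GaloisField p m) : Prop :=
  PerfectCNonlinear2 p n m σ F c ∧ autoCorr2 p n m σ F c 0 = 0

/-- `F` is `c`-differential bent₂: `W_F(x)·conj(W_{cF}(x)) = cC_F(0)` for all `x`,
where `cF` is the map `x ↦ c·F(x)`. -/
def CDifferentialBent2 (p n m : ℕ) [Fact p.Prime] (σ : GaloisField p m → ZMod (p ^ m))
    (F : GaloisField p n → GaloisField p m) (c : GaloisField p m) : Prop :=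
  ∀ x : GaloisField p n,
    Walsh2 p n m σ F x * (starRingEnd ℂ) (Walsh2 p n m σ (fun y => c * F y) x) =
      autoCorr2 p n m σ F c 0

/-
Every exponential sum in the theorem is a sum of `ζ_{p^n}^{σ(G x)}` for a bijection `G` of
`F_{p^n}`: for `F` itself in (b), and for `x ↦ L(x + a) - c·L(x) = (1 - c)·L(x) + L(a)` in (a).
Since `σ` is bijective too, such a sum runs once over all `p^n`-th roots of unity and vanishes.
The remaining Walsh transform `W_{0F}(a)` is a constant times the additive character sum
`∑_x ζ_p^{-Tr(a x)}`, which vanishes for `a ≠ 0`.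
-/

lemma eCharM_eq_stdAddChar (q : ℕ) [NeZero q] (s : ZMod q) :
    eCharM q s = ZMod.stdAddChar s := by
  rw [eCharM, zetaC, ZMod.stdAddChar_apply, ZMod.toCircle_apply, ← Complex.exp_nat_mul]
  congr 1
  ring

lemma stdAddChar_one_ne_one {q : ℕ} [NeZero q] (hq : 1 < q) :
    ZMod.stdAddChar (1 : ZMod q) ≠ 1 := by
  have : Fact (1 < q) := ⟨hq⟩
  rw [← AddChar.map_zero_eq_one (ZMod.stdAddChar (N := q)), ZMod.injective_stdAddChar.ne_iff]
  exact one_ne_zero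

lemma sum_eCharM_eq_zero {q : ℕ} [NeZero q] (hq : 1 < q) : ∑ s : ZMod q, eCharM q s = 0 := by
  simp_rw [eCharM_eq_stdAddChar]
  exact AddChar.sum_eq_zero_of_ne_one (AddChar.ne_one_iff.2 ⟨1, stdAddChar_one_ne_one hq⟩)

lemma sum_eCharM_comp_eq_zero {α : Type*} [Fintype α] {q : ℕ} [NeZero q] (hq : 1 < q)
    {g : α → ZMod q} (hg : Function.Bijective g) : ∑ x, eCharM q (g x) = 0 := by
  rw [hg.sum_comp (eCharM q)]
  exact sum_eCharM_eq_zero hq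

lemma sum_eChar_neg_trAbs_mul_eq_zero (p n : ℕ) [Fact p.Prime] {a : GaloisField p n}
    (ha : a ≠ 0) : ∑ x : GaloisField p n, eChar p (-trAbs p n (a * x)) = 0 := by
  classical
  let ψ : AddChar (GaloisField p n) ℂ :=
    ZMod.stdAddChar.compAddMonoidHom (Algebra.trace (ZMod p) (GaloisField p n)).toAddMonoidHom
  have hψ : ψ ≠ 1 := by
    obtain ⟨y, hy⟩ := Algebra.trace_surjective (ZMod p) (GaloisField p n) 1
    refine AddChar.ne_one_iff.2 ⟨y, ?_⟩
    rw [AddChar.compAddMonoidHom_apply, LinearMap.toAddMonoidHom_coe, hy]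
    exact stdAddChar_one_ne_one (Fact.out : p.Prime).one_lt
  have hsum := AddChar.sum_mulShift (-a) (AddChar.IsPrimitive.of_ne_one hψ)
  rw [if_neg (neg_ne_zero.2 ha), Nat.cast_zero] at hsum
  rw [← hsum]
  refine Finset.sum_congr rfl fun x _ => ?_
  rw [eChar, ← eCharM, eCharM_eq_stdAddChar, trAbs, ← map_neg, mul_neg, mul_comm a x]
  rfl

lemma Walsh2_zero (p n m : ℕ) [Fact p.Prime] (σ : GaloisField p m → ZMod (p ^ m))
    (H : GaloisField p n → GaloisField p m) :
    Walsh2 p n m σ H 0 = ∑ x, eCharM (p ^ m) (σ (H x)) := by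
  simp [Walsh2, trAbs, eChar]

lemma Walsh2_const (p n m : ℕ) [Fact p.Prime] (σ : GaloisField p m → ZMod (p ^ m))
    (b : GaloisField p m) (a : GaloisField p n) :
    Walsh2 p n m σ (fun _ => b) a =
      eCharM (p ^ m) (σ b) * ∑ x, eChar p (-trAbs p n (a * x)) := by
  rw [Walsh2, Finset.mul_sum]

lemma bijective_add_sub_mul {K : Type*} [Field K] {L : K → K} (hL : Function.Bijective L)
    (hadd : ∀ x y, L (x + y) = L x + L y) {c : K} (hc : c ≠ 1) (a : K) :
    Function.Bijective fun x => L (x + a) - c * L x := by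
  have hform : (fun x => L (x + a) - c * L x) = (fun y => (1 - c) * y + L a) ∘ L := by
    funext x
    simp only [Function.comp_apply, hadd]
    ring
  rw [hform]
  exact ((AddGroup.addRight_bijective (L a)).comp
    (mulLeft_bijective₀ (1 - c) (sub_ne_zero.2 hc.symm))).comp hL

theorem statement_17 (p n : ℕ) [Fact p.Prime] (hn : 0 < n)
    (σ : GaloisField p n → ZMod (p ^ n)) (hσ : Function.Bijective σ) :
    (∀ L : GaloisField p n → GaloisField p n,
      Function.Bijective L →
      (∀ x y, L (x + y) = L x + L y) →
      (∀ (t : ZMod p) (x : GaloisField p n), L (t • x) = t • L x) →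
      ∀ c : GaloisField p n, c ≠ 1 → ∀ a : GaloisField p n,
        ∑ x : GaloisField p n, eCharM (p ^ n) (σ (L (x + a) - c * L x)) = 0) ∧
    (∀ F : GaloisField p n → GaloisField p n, Function.Bijective F →
      (∑ x : GaloisField p n, eCharM (p ^ n) (σ (F x)) = 0) ∧
      Walsh2 p n n σ F 0 = 0 ∧
      ∀ a : GaloisField p n,
        Walsh2 p n n σ F a *
            (starRingEnd ℂ) (Walsh2 p n n σ (fun y => 0 * F y) a) =
          ∑ x : GaloisField p n, eCharM (p ^ n) (σ (F (x + 0) - 0 * F x))) := by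
  have hq : 1 < p ^ n := Nat.one_lt_pow hn.ne' (Fact.out : p.Prime).one_lt
  have : NeZero (p ^ n) := ⟨by omega⟩
  refine ⟨fun L hL hadd _ c hc a =>
    sum_eCharM_comp_eq_zero hq (hσ.comp (bijective_add_sub_mul hL hadd hc a)), fun F hF => ?_⟩
  have hsum : ∑ x, eCharM (p ^ n) (σ (F x)) = 0 := sum_eCharM_comp_eq_zero hq (hσ.comp hF)
  have hW0 : Walsh2 p n n σ F 0 = 0 := by rw [Walsh2_zero, hsum]
  refine ⟨hsum, hW0, fun a => ?_⟩
  simp only [add_zero, zero_mul, sub_zero, hsum]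
  rcases eq_or_ne a 0 with rfl | ha
  · rw [hW0, zero_mul]
  · rw [Walsh2_const, sum_eChar_neg_trAbs_mul_eq_zero p n ha, mul_zero, map_zero, mul_zero]
end
end
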